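/- arXiv:2405.02122 — 2 statements merged into one kernel-verified Lean document; each statement's English description precedes it below -/
import Mathlib

section
/- For even positive integers n, the group V_{8n} has exactly 2n + 6 conjugacy classes. -/
/-- Defining relations of the group
`V_{8n} = ⟨a, b : a^{2n} = b⁴ = 1, ba = a⁻¹b⁻¹, b⁻¹a = a⁻¹b⟩`,
as elements of the free group on two generators. -/
def V8nRels (n : ℕ) : Set (FreeGroup (Fin 2)) :=
  {FreeGroup.of 0 ^ (2 * n), FreeGroup.of 1 ^ 4,
   FreeGroup.of 1 * FreeGroup.of 0 * FreeGroup.of 1 * FreeGroup.of 0,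
   (FreeGroup.of 1)⁻¹ * FreeGroup.of 0 * (FreeGroup.of 1)⁻¹ * FreeGroup.of 0}

/-- The group `V_{8n}` as a presented group. -/
abbrev V8n (n : ℕ) := PresentedGroup (V8nRels n)

/-- The generator `a` of `V_{8n}`. -/
def va (n : ℕ) : V8n n := PresentedGroup.of 0

/-- The generator `b` of `V_{8n}`. -/
def vb (n : ℕ) : V8n n := PresentedGroup.of 1

/-!
For even `n` (so that `(r 1, 1)` has order `2n`), the assignment `a ↦ (r 1, 1)`, `b ↦ (sr 0, 1)`
respects the relations of `V_{8n}` and maps `V_{8n}` onto the index-two subgroup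
`{(d, k) | sign d = k mod 2}` of `DihedralGroup (2 * n) × C₄`, of order `8n`; since `V_{8n}` has
at most `8n` elements `aⁱbʲ`, this is an isomorphism. As `C₄` is abelian and every `d` has a
partner `k`, two elements of the subgroup are conjugate iff their dihedral parts are conjugate
and their `C₄` parts agree. Each of the `n + 3` conjugacy classes of `DihedralGroup (2 * n)`
(rotations `r (±i)`, and reflections `sr i` by the parity of `i`) therefore splits into two,
giving `2n + 6`.
-/

theorem card_conjClasses_eq_card_range {G T : Type*} [Monoid G] (f : G → T)
    (hf : ∀ x y, IsConj x y ↔ f x = f y) : Nat.card (ConjClasses G) = Nat.card (Set.range f) :=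
  Nat.card_congr ((Quotient.congrRight hf).trans (Setoid.quotientKerEquivRange f))

theorem MulEquiv.card_conjClasses_eq {G H : Type*} [Group G] [Group H] (e : G ≃* H) :
    Nat.card (ConjClasses G) = Nat.card (ConjClasses H) := by
  have hf (x y : G) : IsConj x y ↔ ConjClasses.mk (e x) = ConjClasses.mk (e y) := by
    rw [ConjClasses.mk_eq_mk_iff_isConj]
    refine ⟨e.toMonoidHom.map_isConj, fun h => ?_⟩
    simpa using e.symm.toMonoidHom.map_isConj h
  have hsurj : Function.Surjective fun x => ConjClasses.mk (e x) :=
    ConjClasses.mk_surjective.comp e.surjective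
  rw [card_conjClasses_eq_card_range _ hf, Set.range_eq_univ.2 hsurj, Nat.card_univ]

theorem Nat.card_pullback_eq_mul {α β γ : Type*} [Finite α] [Finite β] (f : α → γ) (g : β → γ)
    {c : ℕ} (hg : ∀ z, Nat.card {b // g b = z} = c) :
    Nat.card {p : α × β // f p.1 = g p.2} = Nat.card α * c := by
  have := Fintype.ofFinite α
  have hfib (a : α) : Nat.card {b // f a = g b} = c := by simpa only [eq_comm] using hg (f a)
  rw [Nat.card_congr (Equiv.subtypeProdEquivSigmaSubtype fun a b => f a = g b), Nat.card_sigma]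
  simp [hfib, Nat.card_eq_fintype_card, mul_comm]

theorem Subgroup.isConj_iff_of_forall_exists_prod_mem {H A : Type*} [Group H] [CommGroup A]
    {K : Subgroup (H × A)} (hK : ∀ h : H, ∃ a : A, (h, a) ∈ K) {x y : K} :
    IsConj x y ↔ IsConj (x : H × A).1 (y : H × A).1 ∧ (x : H × A).2 = (y : H × A).2 := by
  simp only [isConj_iff]
  constructor
  · rintro ⟨c, rfl⟩
    exact ⟨⟨(c : H × A).1, rfl⟩, by simp⟩
  · rintro ⟨⟨h, hxy⟩, h2⟩
    obtain ⟨a, ha⟩ := hK h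
    refine ⟨⟨(h, a), ha⟩, Subtype.ext (Prod.ext hxy ?_)⟩
    simp [h2]

section FiberProduct

variable {H A M : Type*} [Group H] [CommGroup A] [CommGroup M] [Finite H] [Finite A]
  (σ : H →* M) (τ : A →* M) {c : ℕ}

theorem MonoidHom.card_eqLocus_fst_snd (hτ : ∀ m, Nat.card {a // τ a = m} = c) :
    Nat.card ((σ.comp (MonoidHom.fst H A)).eqLocus (τ.comp (MonoidHom.snd H A))) =
      Nat.card H * c :=
  Nat.card_pullback_eq_mul σ τ hτ

theorem MonoidHom.card_conjClasses_eqLocus_fst_snd (hτ : ∀ m, Nat.card {a // τ a = m} = c) :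
    Nat.card (ConjClasses ((σ.comp (MonoidHom.fst H A)).eqLocus (τ.comp (MonoidHom.snd H A)))) =
      Nat.card (ConjClasses H) * c := by
  set K := (σ.comp (MonoidHom.fst H A)).eqLocus (τ.comp (MonoidHom.snd H A))
  have hK (h : H) : ∃ a : A, (h, a) ∈ K := by
    have : 0 < Nat.card {a // τ a = σ h} := by
      have : Nonempty {a // τ a = 1} := ⟨⟨1, map_one τ⟩⟩
      rw [hτ, ← hτ 1]
      exact Nat.card_pos
    obtain ⟨⟨a, ha⟩⟩ := (Nat.card_pos_iff.1 this).1
    exact ⟨a, ha.symm⟩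
  let σbar : ConjClasses H → M := ConjClasses.mkEquiv.symm ∘ ConjClasses.map σ
  let f (x : K) : ConjClasses H × A := (ConjClasses.mk (x : H × A).1, (x : H × A).2)
  have hf (x y : K) : IsConj x y ↔ f x = f y := by
    rw [Subgroup.isConj_iff_of_forall_exists_prod_mem hK, Prod.ext_iff,
      ConjClasses.mk_eq_mk_iff_isConj]
  have hrange : Set.range f = {p | σbar p.1 = τ p.2} := by
    ext ⟨C, a⟩
    obtain ⟨h, rfl⟩ := ConjClasses.mk_surjective C
    constructor
    · rintro ⟨⟨⟨h', a'⟩, hmem⟩, hx⟩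
      obtain ⟨hC, rfl⟩ := Prod.mk.inj hx
      rw [← hC]
      exact hmem
    · exact fun hmem => ⟨⟨(h, a), hmem⟩, rfl⟩
  rw [card_conjClasses_eq_card_range f hf, hrange]
  exact Nat.card_pullback_eq_mul σbar τ hτ

end FiberProduct

namespace DihedralGroup

variable {n : ℕ}

def sign (n : ℕ) : DihedralGroup (2 * n) →* Multiplicative (ZMod 2) where
  toFun
    | r i => .ofAdd (ZMod.castHom (dvd_mul_right 2 n) (ZMod 2) i)
    | sr i => .ofAdd (ZMod.castHom (dvd_mul_right 2 n) (ZMod 2) i + 1)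
  map_one' := by rw [one_def]; simp
  map_mul' x y := by
    cases x <;> cases y <;>
      simp only [r_mul_r, r_mul_sr, sr_mul_r, sr_mul_sr, map_add, map_sub, ← ofAdd_add]
    all_goals congr 1; grind

@[simp]
theorem sign_r (i : ZMod (2 * n)) :
    sign n (r i) = .ofAdd (ZMod.castHom (dvd_mul_right 2 n) (ZMod 2) i) := rfl

@[simp]
theorem sign_sr (i : ZMod (2 * n)) :
    sign n (sr i) = .ofAdd (ZMod.castHom (dvd_mul_right 2 n) (ZMod 2) i + 1) := rfl

def conjInvariant (n : ℕ) : DihedralGroup (2 * n) → Fin (n + 1) ⊕ ZMod 2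
  | r i => .inl ⟨min i.val (2 * n - i.val), by omega⟩
  | sr i => .inr (ZMod.castHom (dvd_mul_right 2 n) (ZMod 2) i)

variable [NeZero n]

theorem conjInvariant_r_neg (i : ZMod (2 * n)) :
    conjInvariant n (r (-i)) = conjInvariant n (r i) := by
  rcases eq_or_ne i 0 with rfl | hi
  · rw [neg_zero]
  · have := ZMod.val_lt i
    simp only [conjInvariant, ZMod.neg_val, if_neg hi, Sum.inl.injEq, Fin.mk.injEq]
    omega

theorem conjInvariant_conj (g x : DihedralGroup (2 * n)) :
    conjInvariant n (g * x * g⁻¹) = conjInvariant n x := by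
  cases g <;> cases x <;> simp only [inv_r, inv_sr, r_mul_r, r_mul_sr, sr_mul_r, sr_mul_sr]
  · rw [add_neg_cancel_comm]
  · simp only [conjInvariant, map_add, map_sub, map_neg, Sum.inr.injEq]
    grind
  · rw [show ∀ j i : ZMod (2 * n), j - (j + i) = -i by intros; ring, conjInvariant_r_neg]
  · simp only [conjInvariant, map_sub, Sum.inr.injEq]
    grind

theorem isConj_of_conjInvariant_eq {x y : DihedralGroup (2 * n)}
    (h : conjInvariant n x = conjInvariant n y) : IsConj x y := by
  rw [isConj_iff]
  cases x with
  | r i =>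
    cases y with
    | sr j => simp [conjInvariant] at h
    | r j =>
      simp only [conjInvariant, Sum.inl.injEq, Fin.mk.injEq] at h
      have := ZMod.val_lt i
      have := ZMod.val_lt j
      obtain hij | hij : i.val = j.val ∨ i.val + j.val = 2 * n := by omega
      · exact ⟨1, by rw [ZMod.val_injective _ hij]; group⟩
      · have hsum : i + j = 0 := by
          rw [← ZMod.natCast_zmod_val i, ← ZMod.natCast_zmod_val j, ← Nat.cast_add, hij,
            ZMod.natCast_self]
        refine ⟨sr 0, ?_⟩
        rw [inv_sr, sr_mul_r, sr_mul_sr, eq_neg_of_add_eq_zero_right hsum]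
        ring_nf
  | sr i =>
    cases y with
    | r j => simp [conjInvariant] at h
    | sr j =>
      simp only [conjInvariant, Sum.inr.injEq, ZMod.castHom_apply, ZMod.cast_eq_val,
        ZMod.natCast_eq_natCast_iff'] at h
      -- `sr t` conjugates `sr i` to `sr (2t - i)`, and `2t = i + j` is solvable as `i ≡ j mod 2`.
      refine ⟨sr ((i.val + j.val) / 2 : ℕ), ?_⟩
      have htwice : ((2 * ((i.val + j.val) / 2) : ℕ) : ZMod (2 * n)) = i + j := by
        rw [Nat.mul_div_cancel' (by omega), Nat.cast_add, ZMod.natCast_zmod_val,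
          ZMod.natCast_zmod_val]
      rw [inv_sr, sr_mul_sr, r_mul_sr]
      congr 1
      push_cast at htwice
      linear_combination htwice

theorem isConj_iff_conjInvariant_eq {x y : DihedralGroup (2 * n)} :
    IsConj x y ↔ conjInvariant n x = conjInvariant n y := by
  refine ⟨fun h => ?_, isConj_of_conjInvariant_eq⟩
  obtain ⟨g, rfl⟩ := isConj_iff.1 h
  exact (conjInvariant_conj g x).symm

theorem conjInvariant_surjective : Function.Surjective (conjInvariant n) := by
  rintro (c | e)
  · refine ⟨r (c : ℕ), ?_⟩
    have := c.isLt
    have := NeZero.pos n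
    simp only [conjInvariant, Sum.inl.injEq, Fin.ext_iff,
      ZMod.val_natCast_of_lt (by omega : (c : ℕ) < 2 * n)]
    omega
  · exact ⟨sr (e.val : ℕ), by simp [conjInvariant]⟩

theorem card_conjClasses_two_mul : Nat.card (ConjClasses (DihedralGroup (2 * n))) = n + 3 := by
  rw [card_conjClasses_eq_card_range _ fun _ _ => isConj_iff_conjInvariant_eq,
    Set.range_eq_univ.2 conjInvariant_surjective, Nat.card_univ, Nat.card_sum,
    Nat.card_eq_fintype_card, Fintype.card_fin, Nat.card_zmod]

end DihedralGroup

namespace V8n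

variable {n : ℕ}

theorem va_pow_two_mul : va n ^ (2 * n) = 1 :=
  PresentedGroup.one_of_mem (rels := V8nRels n) (by simp [V8nRels])

theorem vb_pow_four : vb n ^ 4 = 1 :=
  PresentedGroup.one_of_mem (rels := V8nRels n) (by simp [V8nRels])

theorem vb_mul_va_mul_vb : vb n * va n * vb n = (va n)⁻¹ :=
  eq_inv_of_mul_eq_one_left (PresentedGroup.one_of_mem (rels := V8nRels n) (by simp [V8nRels]))

theorem vb_inv_mul_va_mul_vb_inv : (vb n)⁻¹ * va n * (vb n)⁻¹ = (va n)⁻¹ :=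
  eq_inv_of_mul_eq_one_left (PresentedGroup.one_of_mem (rels := V8nRels n) (by simp [V8nRels]))

theorem vb_sq_inv : (vb n ^ 2)⁻¹ = vb n ^ 2 :=
  inv_eq_of_mul_eq_one_right (by rw [← pow_add, vb_pow_four])

theorem commute_va_vb_sq : Commute (va n) (vb n ^ 2) := by
  have hconj : vb n ^ 2 * va n * vb n ^ 2 = va n := by
    calc vb n ^ 2 * va n * vb n ^ 2 = vb n * (vb n * va n * vb n) * vb n := by
          simp only [pow_two, mul_assoc]
      _ = vb n * ((vb n)⁻¹ * va n * (vb n)⁻¹) * vb n := by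
          rw [vb_mul_va_mul_vb, vb_inv_mul_va_mul_vb_inv]
      _ = va n := by group
  calc va n * vb n ^ 2 = vb n ^ 2 * va n * (vb n ^ 2 * vb n ^ 2) := by
        rw [← mul_assoc, hconj]
    _ = vb n ^ 2 * va n := by rw [← pow_add, vb_pow_four, mul_one]

theorem vb_mul_va_zpow (i : ℤ) : vb n * va n ^ i = va n ^ (-i) * vb n ^ (2 * i + 1) := by
  have hconj : vb n * va n * (vb n)⁻¹ = (va n)⁻¹ * vb n ^ 2 := by
    calc vb n * va n * (vb n)⁻¹ = (vb n * va n * vb n) * (vb n ^ 2)⁻¹ := by group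
      _ = (va n)⁻¹ * vb n ^ 2 := by rw [vb_mul_va_mul_vb, vb_sq_inv]
  calc vb n * va n ^ i = (vb n * va n * (vb n)⁻¹) ^ i * vb n := by rw [conj_zpow]; group
    _ = va n ^ (-i) * vb n ^ (2 * i + 1) := by
      rw [hconj, (commute_va_vb_sq.inv_left).mul_zpow, inv_zpow', ← zpow_natCast, ← zpow_mul,
        mul_assoc, ← zpow_add_one]
      push_cast
      ring_nf

theorem vb_inv_mul_va_zpow (i : ℤ) : (vb n)⁻¹ * va n ^ i = va n ^ (-i) * vb n ^ (2 * i - 1) := by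
  have h := vb_mul_va_zpow (n := n) (-i)
  calc (vb n)⁻¹ * va n ^ i = (vb n)⁻¹ * (vb n * va n ^ (-i) * vb n ^ (2 * i - 1)) := by
        rw [h]; group
    _ = va n ^ (-i) * vb n ^ (2 * i - 1) := by group

theorem exists_eq_zpow_mul_zpow (x : V8n n) : ∃ i j : ℤ, x = va n ^ i * vb n ^ j := by
  have hx : x ∈ Subgroup.closure (Set.range (PresentedGroup.of (rels := V8nRels n))) := by
    simp
  induction hx using Subgroup.closure_induction_left with
  | one => exact ⟨0, 0, by simp⟩
  | mul_left g hg y _ ih =>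
    obtain ⟨k, rfl⟩ := hg
    obtain ⟨i, j, rfl⟩ := ih
    fin_cases k
    · exact ⟨i + 1, j, by change va n * _ = _; group⟩
    · exact ⟨-i, 2 * i + 1 + j, by
        change vb n * _ = _; rw [← mul_assoc, vb_mul_va_zpow, mul_assoc, ← zpow_add]⟩
  | inv_mul_cancel g hg y _ ih =>
    obtain ⟨k, rfl⟩ := hg
    obtain ⟨i, j, rfl⟩ := ih
    fin_cases k
    · exact ⟨i - 1, j, by change (va n)⁻¹ * _ = _; group⟩
    · exact ⟨-i, 2 * i - 1 + j, by
        change (vb n)⁻¹ * _ = _; rw [← mul_assoc, vb_inv_mul_va_zpow, mul_assoc, ← zpow_add]⟩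

theorem normalForm_surjective [NeZero n] :
    Function.Surjective fun p : ZMod (2 * n) × ZMod 4 => va n ^ p.1.val * vb n ^ p.2.val := by
  intro x
  obtain ⟨i, j, rfl⟩ := exists_eq_zpow_mul_zpow x
  refine ⟨(i, j), ?_⟩
  simp only [← zpow_natCast, ZMod.val_intCast]
  rw [← zpow_eq_zpow_emod' i va_pow_two_mul, ← zpow_eq_zpow_emod' j vb_pow_four]

def lift {G : Type*} [Group G] (x y : G) (hx : x ^ (2 * n) = 1) (hy : y ^ 4 = 1)
    (hyx : y * x * y * x = 1) (hyx' : y⁻¹ * x * y⁻¹ * x = 1) : V8n n →* G :=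
  PresentedGroup.toGroup (f := ![x, y]) (by rintro r (rfl | rfl | rfl | rfl) <;> simpa)

section Lift

variable {G : Type*} [Group G] {x y : G} (hx : x ^ (2 * n) = 1) (hy : y ^ 4 = 1)
  (hyx : y * x * y * x = 1) (hyx' : y⁻¹ * x * y⁻¹ * x = 1)

@[simp]
theorem lift_va : lift x y hx hy hyx hyx' (va n) = x := PresentedGroup.toGroup.of _

@[simp]
theorem lift_vb : lift x y hx hy hyx hyx' (vb n) = y := PresentedGroup.toGroup.of _

end Lift

def mod2 : Multiplicative (ZMod 4) →* Multiplicative (ZMod 2) :=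
  AddMonoidHom.toMultiplicative (ZMod.castHom (by norm_num : 2 ∣ 4) (ZMod 2)).toAddMonoidHom

theorem card_mod2_fiber (m : Multiplicative (ZMod 2)) : Nat.card {k // mod2 k = m} = 2 := by
  rw [Nat.card_eq_fintype_card]
  revert m
  decide

theorem eq_or_eq_mul_of_mod2_eq {k l : Multiplicative (ZMod 4)} (h : mod2 k = mod2 l) :
    l = k ∨ l = k * .ofAdd 2 := by
  revert k l
  decide

variable (n) in
def model : Subgroup (DihedralGroup (2 * n) × Multiplicative (ZMod 4)) :=
  ((DihedralGroup.sign n).comp (MonoidHom.fst _ _)).eqLocus (mod2.comp (MonoidHom.snd _ _))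

theorem mem_model {p : DihedralGroup (2 * n) × Multiplicative (ZMod 4)} :
    p ∈ model n ↔ DihedralGroup.sign n p.1 = mod2 p.2 :=
  Iff.rfl

theorem card_model [NeZero n] : Nat.card (model n) = 8 * n := by
  rw [model, MonoidHom.card_eqLocus_fst_snd _ _ card_mod2_fiber, DihedralGroup.nat_card]
  ring

theorem card_conjClasses_model [NeZero n] : Nat.card (ConjClasses (model n)) = 2 * n + 6 := by
  rw [model, MonoidHom.card_conjClasses_eqLocus_fst_snd _ _ card_mod2_fiber,
    DihedralGroup.card_conjClasses_two_mul]
  ring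

open DihedralGroup

def toProd (hn : Even n) : V8n n →* DihedralGroup (2 * n) × Multiplicative (ZMod 4) :=
  lift (r 1, .ofAdd 1) (sr 0, .ofAdd 1)
    (by
      obtain ⟨m, rfl⟩ := hn
      rw [Prod.pow_mk, r_one_pow_n, ← ofAdd_nsmul, nsmul_one,
        (ZMod.natCast_eq_zero_iff _ 4).2 ⟨m, by ring⟩, ofAdd_zero, Prod.mk_one_one])
    (by simp only [Prod.pow_mk, Prod.mk_eq_one]; exact ⟨by simp [pow_succ], by decide⟩)
    (by
      simp only [Prod.mk_mul_mk, Prod.mk_eq_one]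
      exact ⟨by simp [sr_mul_r, sr_mul_sr], by decide⟩)
    (by
      simp only [Prod.inv_mk, Prod.mk_mul_mk, Prod.mk_eq_one]
      exact ⟨by simp [sr_mul_r, sr_mul_sr], by decide⟩)

theorem toProd_vb_sq (hn : Even n) : toProd hn (vb n ^ 2) = (1, .ofAdd 2) := by
  rw [toProd, map_pow, lift_vb, Prod.pow_mk, pow_two, sr_mul_self]
  rfl

theorem toProd_mem_model (hn : Even n) (x : V8n n) : toProd hn x ∈ model n := by
  suffices ((sign n).comp (MonoidHom.fst _ _)).comp (toProd hn) =
      (mod2.comp (MonoidHom.snd _ _)).comp (toProd hn) from DFunLike.congr_fun this x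
  refine PresentedGroup.ext fun k => ?_
  fin_cases k
  · show sign n (toProd hn (va n)).1 = mod2 (toProd hn (va n)).2
    simp [toProd, mod2]
  · show sign n (toProd hn (vb n)).1 = mod2 (toProd hn (vb n)).2
    simp [toProd, mod2]

def toModel (hn : Even n) : V8n n →* model n :=
  (toProd hn).codRestrict _ (toProd_mem_model hn)

theorem toModel_surjective [NeZero n] (hn : Even n) : Function.Surjective (toModel hn) := by
  rintro ⟨⟨d, k⟩, hk⟩
  obtain ⟨x, hx⟩ : ∃ x, (toProd hn x).1 = d := by
    cases d with
    | r i => exact ⟨va n ^ i.val, by simp [toProd]⟩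
    | sr i => exact ⟨vb n * va n ^ i.val, by simp [toProd, sr_mul_r]⟩
  have hmod : mod2 (toProd hn x).2 = mod2 k := by
    rw [← mem_model.1 hk, ← hx]
    exact (mem_model.1 (toProd_mem_model hn x)).symm
  -- Two lifts of `d` to `model n` differ by the central element `(1, ofAdd 2)`, the image of `b²`.
  rcases eq_or_eq_mul_of_mod2_eq hmod with h | h
  · exact ⟨x, Subtype.ext (Prod.ext hx h.symm)⟩
  · refine ⟨x * vb n ^ 2, Subtype.ext ?_⟩
    change toProd hn (x * vb n ^ 2) = (d, k)
    rw [map_mul, toProd_vb_sq, h, ← hx]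
    exact Prod.ext (mul_one _) rfl

theorem toModel_bijective [NeZero n] (hn : Even n) : Function.Bijective (toModel hn) := by
  have : Finite (V8n n) := Finite.of_surjective _ normalForm_surjective
  refine (Nat.bijective_iff_surjective_and_card _).2 ⟨toModel_surjective hn,
    le_antisymm ?_ (Nat.card_le_card_of_surjective _ (toModel_surjective hn))⟩
  calc Nat.card (V8n n) ≤ Nat.card (ZMod (2 * n) × ZMod 4) :=
        Nat.card_le_card_of_surjective _ normalForm_surjective
    _ = Nat.card (model n) := by
        rw [card_model, Nat.card_prod, Nat.card_zmod, Nat.card_zmod]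
        ring

end V8n

theorem stmt_5 (n : ℕ) (hn : 0 < n) (hev : Even n) :
    Nat.card (ConjClasses (V8n n)) = 2 * n + 6 := by
  have : NeZero n := ⟨hn.ne'⟩
  rw [(MulEquiv.ofBijective _ (V8n.toModel_bijective hev)).card_conjClasses_eq,
    V8n.card_conjClasses_model]
end

section
/- For even n, the map φ_k sending a to diag(iω^k, iω^{−k}) and b to [[0,1],[−1,0]], where ω = exp(πi/n), extends to a group homomorphism from V_{8n} to GL₂(ℂ) for each 1 ≤ k ≤ n−1. -/
/-!
The matrix `B = [[0, 1], [-1, 0]]` squares to `-1`, so `B⁻¹ = -B` and `B⁴ = 1`, and conjugating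
a diagonal matrix `diag(x, y)` by `B` swaps its entries, giving `B diag(x, y) B = diag(-y, -x)`.
When `x y = -1` this is `diag(x, y)⁻¹`, which yields both relations `BABA = 1` and `B⁻¹AB⁻¹A = 1`.
For `x = iω^k`, `y = iω^{-k}` we have `x y = i² = -1`, and `x^{2n} = y^{2n} = 1` because
`ω^{2n} = 1` and `i^{2n} = (-1)^n = 1` for even `n`.
-/

theorem V8n.exists_hom {G : Type*} [Group G] {n : ℕ} (a b : G) (ha : a ^ (2 * n) = 1)
    (hb : b ^ 4 = 1) (hbaba : b * a * b * a = 1) (hbaba' : b⁻¹ * a * b⁻¹ * a = 1) :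
    ∃ ρ : V8n n →* G, ρ (va n) = a ∧ ρ (vb n) = b := by
  have hrels : ∀ r ∈ V8nRels n, FreeGroup.lift ![a, b] r = 1 := by
    rintro r (rfl | rfl | rfl | rfl) <;> simpa
  exact ⟨PresentedGroup.toGroup hrels, PresentedGroup.toGroup.of hrels,
    PresentedGroup.toGroup.of hrels⟩

namespace Matrix.GeneralLinearGroup

variable {R : Type*} [CommRing R]

def diagFinTwo (x y : R) (hxy : x * y = -1) : GL (Fin 2) R where
  val := !![x, 0; 0, y]
  inv := !![-y, 0; 0, -x]
  val_inv := by
    ext i j; fin_cases i <;> fin_cases j <;> simp <;> linear_combination -hxy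
  inv_val := by
    ext i j; fin_cases i <;> fin_cases j <;> simp <;> linear_combination -hxy

def rotFinTwo : GL (Fin 2) R where
  val := !![0, 1; -1, 0]
  inv := !![0, -1; 1, 0]
  val_inv := by ext i j; fin_cases i <;> fin_cases j <;> simp
  inv_val := by ext i j; fin_cases i <;> fin_cases j <;> simp

theorem val_diagFinTwo (x y : R) (hxy : x * y = -1) :
    (diagFinTwo x y hxy : Matrix (Fin 2) (Fin 2) R) = !![x, 0; 0, y] := rfl

theorem val_rotFinTwo : (rotFinTwo : GL (Fin 2) R) = !![(0 : R), 1; -1, 0] := rfl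

theorem diagFinTwo_pow_eq_one {x y : R} (hxy : x * y = -1) {m : ℕ} (hx : x ^ m = 1)
    (hy : y ^ m = 1) : diagFinTwo x y hxy ^ m = 1 := by
  ext1
  rw [Units.val_pow_eq_pow_val, val_diagFinTwo, ← diagonal_vec2, diagonal_pow, Units.val_one]
  simp [hx, hy, ← diagonal_one]

theorem rotFinTwo_sq : (rotFinTwo : GL (Fin 2) R) ^ 2 = -1 := by
  ext i j; fin_cases i <;> fin_cases j <;> simp [sq, val_rotFinTwo]

theorem rotFinTwo_pow_four : (rotFinTwo : GL (Fin 2) R) ^ 4 = 1 := by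
  rw [show 4 = 2 * 2 from rfl, pow_mul, rotFinTwo_sq, neg_one_sq]

theorem rotFinTwo_inv : (rotFinTwo : GL (Fin 2) R)⁻¹ = -(rotFinTwo : GL (Fin 2) R) := by
  refine inv_eq_of_mul_eq_one_right ?_
  rw [mul_neg, ← sq, rotFinTwo_sq, neg_neg]

theorem rotFinTwo_mul_diagFinTwo_mul_rotFinTwo (x y : R) (hxy : x * y = -1) :
    rotFinTwo * diagFinTwo x y hxy * rotFinTwo = (diagFinTwo x y hxy)⁻¹ := by
  ext i j; fin_cases i <;> fin_cases j <;> simp [val_rotFinTwo, diagFinTwo]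

theorem rotFinTwo_inv_mul_diagFinTwo_mul_rotFinTwo_inv (x y : R) (hxy : x * y = -1) :
    rotFinTwo⁻¹ * diagFinTwo x y hxy * rotFinTwo⁻¹ = (diagFinTwo x y hxy)⁻¹ := by
  rw [rotFinTwo_inv, neg_mul, neg_mul, mul_neg, neg_neg,
    rotFinTwo_mul_diagFinTwo_mul_rotFinTwo]

end Matrix.GeneralLinearGroup

theorem Complex.exp_pi_mul_I_div_pow_two_mul (n : ℕ) :
    Complex.exp (Real.pi * Complex.I / n) ^ (2 * n) = 1 := by
  rcases eq_or_ne n 0 with rfl | hn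
  · simp
  rw [← Complex.exp_nat_mul, ← Complex.exp_two_pi_mul_I]
  congr 1
  field_simp
  push_cast
  ring

theorem Complex.I_mul_pow_two_mul_eq_one {n : ℕ} (hn : Even n) {z : ℂ} (hz : z ^ (2 * n) = 1) :
    (Complex.I * z) ^ (2 * n) = 1 := by
  rw [mul_pow, hz, pow_mul, Complex.I_sq, hn.neg_one_pow, one_mul]

open Matrix Complex in
theorem stmt_8_general (n : ℕ) (hev : Even n) (k : ℕ) :
    ∃ ρ : V8n n →* GL (Fin 2) ℂ,
      (ρ (va n) : Matrix (Fin 2) (Fin 2) ℂ) =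
        !![Complex.I * Complex.exp (Real.pi * Complex.I / n) ^ k, 0;
           0, Complex.I * (Complex.exp (Real.pi * Complex.I / n) ^ k)⁻¹] ∧
      (ρ (vb n) : Matrix (Fin 2) (Fin 2) ℂ) = !![0, 1; -1, 0] := by
  open GeneralLinearGroup in
  set ζ := Complex.exp (Real.pi * Complex.I / n) ^ k
  have hζ : ζ ^ (2 * n) = 1 := by
    rw [← pow_mul, mul_comm k, pow_mul, exp_pi_mul_I_div_pow_two_mul, one_pow]
  have hxy : (I * ζ) * (I * ζ⁻¹) = -1 := by
    rw [mul_mul_mul_comm, I_mul_I, mul_inv_cancel₀ (pow_ne_zero _ (exp_ne_zero _)), mul_one]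
  set A := diagFinTwo (I * ζ) (I * ζ⁻¹) hxy
  have hA : A ^ (2 * n) = 1 := diagFinTwo_pow_eq_one hxy
    (I_mul_pow_two_mul_eq_one hev hζ) (I_mul_pow_two_mul_eq_one hev (by rw [inv_pow, hζ, inv_one]))
  obtain ⟨ρ, hρa, hρb⟩ := V8n.exists_hom A rotFinTwo hA rotFinTwo_pow_four
    (by rw [rotFinTwo_mul_diagFinTwo_mul_rotFinTwo, inv_mul_cancel])
    (by rw [rotFinTwo_inv_mul_diagFinTwo_mul_rotFinTwo_inv, inv_mul_cancel])
  exact ⟨ρ, by rw [hρa]; rfl, by rw [hρb]; rfl⟩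

open Matrix Complex in
theorem stmt_8 (n : ℕ) (hn : 0 < n) (hev : Even n) (k : ℕ) (hk1 : 1 ≤ k) (hk : k ≤ n - 1) :
    ∃ ρ : V8n n →* GL (Fin 2) ℂ,
      (ρ (va n) : Matrix (Fin 2) (Fin 2) ℂ) =
        !![Complex.I * Complex.exp (Real.pi * Complex.I / n) ^ k, 0;
           0, Complex.I * (Complex.exp (Real.pi * Complex.I / n) ^ k)⁻¹] ∧
      (ρ (vb n) : Matrix (Fin 2) (Fin 2) ℂ) = !![0, 1; -1, 0] :=
  stmt_8_general n hev k
end
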